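/- arXiv:1606.06478 — 2 statements merged into one kernel-verified Lean document; each statement's English description precedes it below -/
import Mathlib

section
/- Let M and N be nonzero commutative binoids of finite combinatorial dimension. Then dim(M ∧ N) = dim M + dim N, where M ∧ N is the smash product over the trivial binoid. -/
/-!  Basic theory of (commutative) binoids: a commutative monoid together with
an absorbing element `infty`.  We use a bundled structure `BinoidOn X`. -/

structure BinoidOn (X : Type u) where
  add : X → X → X
  zero : X
  infty : X
  add_assoc : ∀ a b c : X, add (add a b) c = add a (add b c)
  add_comm : ∀ a b : X, add a b = add b a
  zero_add : ∀ a : X, add zero a = a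
  infty_add : ∀ a : X, add infty a = infty

namespace BinoidOn

variable {X : Type u} {Y : Type v} (B : BinoidOn X) (C : BinoidOn Y)

/-- `n`-fold multiple `n • a`. -/
def smul (B : BinoidOn X) : ℕ → X → X
  | 0, _ => B.zero
  | n + 1, a => B.add a (smul B n a)

/-- Sum of a list of elements. -/
def listSum (l : List X) : X := l.foldr B.add B.zero

/-- An ideal of a binoid: a nonempty subset `I` with `I + N ⊆ I`. -/
def IsIdeal (I : Set X) : Prop := I.Nonempty ∧ ∀ a ∈ I, ∀ x : X, B.add a x ∈ I

/-- A subbinoid: a submonoid containing `infty`. -/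
def IsSubbinoid (M : Set X) : Prop :=
  B.zero ∈ M ∧ B.infty ∈ M ∧ ∀ a ∈ M, ∀ b ∈ M, B.add a b ∈ M

/-- The set of units. -/
def unitsSet : Set X := {u | ∃ a, B.add u a = B.zero}

/-- `N₊`, the ideal of non-units. -/
def nplus : Set X := (B.unitsSet)ᶜ

/-- The ideal generated by a set. -/
def genIdeal (S : Set X) : Set X := {x | ∃ a ∈ S, ∃ n, x = B.add a n}

/-- The `n`-fold sum `nI = {a₁ + ⋯ + aₙ | aᵢ ∈ I}`. -/
def nSum (n : ℕ) (I : Set X) : Set X :=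
  {x | ∃ l : List X, l.length = n ∧ (∀ a ∈ l, a ∈ I) ∧ x = B.listSum l}

/-- The Frobenius power `[q]I`: the ideal generated by `{q • a | a ∈ I}`. -/
def frob (q : ℕ) (I : Set X) : Set X := B.genIdeal {x | ∃ a ∈ I, x = B.smul q a}

/-- The radical of an ideal. -/
def radical (I : Set X) : Set X := {a | ∃ n : ℕ, 0 < n ∧ B.smul n a ∈ I}

/-- `N₊`-primary ideal. -/
def IsPrimary (I : Set X) : Prop := B.radical I = B.nplus

/-- Finitely generated binoid. -/
def FG : Prop :=
  ∃ G : Finset X, ∀ x : X, x = B.infty ∨ ∃ l : List X, (∀ a ∈ l, a ∈ G) ∧ x = B.listSum l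

/-- Semipositive: a nonzero binoid with finitely many units. -/
def Semipositive : Prop := B.zero ≠ B.infty ∧ B.unitsSet.Finite

/-- Prime ideal. -/
def IsPrime (P : Set X) : Prop :=
  B.IsIdeal P ∧ P ≠ Set.univ ∧ ∀ a b : X, B.add a b ∈ P → a ∈ P ∨ b ∈ P

/-- The (combinatorial) dimension of the binoid is `d`: there is a strictly
increasing chain of prime ideals of length `d`, and no longer one. -/
def HasDim (d : ℕ) : Prop :=
  (∃ c : Fin (d + 1) → Set X, StrictMono c ∧ ∀ i, B.IsPrime (c i)) ∧
    ∀ (k : ℕ) (c : Fin (k + 1) → Set X), StrictMono c → (∀ i, B.IsPrime (c i)) → k ≤ d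

end BinoidOn

/-- The setoid collapsing a subset `A` to a single point (Rees congruence). -/
def collapseSetoid {X : Type u} (A : Set X) : Setoid X where
  r x y := x = y ∨ (x ∈ A ∧ y ∈ A)
  iseqv := ⟨fun _ => Or.inl rfl,
    fun h => h.elim (fun e => Or.inl e.symm) (fun h => Or.inr ⟨h.2, h.1⟩),
    fun h1 h2 => by
      rcases h1 with rfl | h1
      · exact h2
      · rcases h2 with rfl | h2
        · exact Or.inr h1
        · exact Or.inr ⟨h1.1, h2.2⟩⟩

namespace BinoidOn

variable {X : Type u} {Y : Type v} (B : BinoidOn X) (C : BinoidOn Y)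

/-- The underlying set of the Rees quotient `N/I` (we collapse the ideal
generated by `I`; for an ideal `I` this is `I` itself). -/
abbrev ReesQuot (I : Set X) : Type u := Quotient (collapseSetoid (B.genIdeal I))

lemma genIdeal_closed {I : Set X} {a : X} (ha : a ∈ B.genIdeal I) (x : X) :
    B.add a x ∈ B.genIdeal I := by
  obtain ⟨b, hb, n, rfl⟩ := ha
  exact ⟨b, hb, B.add n x, (B.add_assoc b n x)⟩

/-- The Rees quotient binoid `N/I`. -/
def quotB (I : Set X) : BinoidOn (B.ReesQuot I) where
  add := Quotient.map₂ B.add (by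
    rintro a a' (rfl | ⟨ha, ha'⟩) b b' (rfl | ⟨hb, hb'⟩)
    · exact Or.inl rfl
    · exact Or.inr ⟨by rw [B.add_comm]; exact B.genIdeal_closed hb _,
        by rw [B.add_comm]; exact B.genIdeal_closed hb' _⟩
    · exact Or.inr ⟨B.genIdeal_closed ha _, B.genIdeal_closed ha' _⟩
    · exact Or.inr ⟨B.genIdeal_closed ha _, B.genIdeal_closed ha' _⟩)
  zero := Quotient.mk _ B.zero
  infty := Quotient.mk _ B.infty
  add_assoc := by
    rintro ⟨a⟩ ⟨b⟩ ⟨c⟩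
    exact congrArg (Quotient.mk _) (B.add_assoc a b c)
  add_comm := by
    rintro ⟨a⟩ ⟨b⟩
    exact congrArg (Quotient.mk _) (B.add_comm a b)
  zero_add := by
    rintro ⟨a⟩
    exact congrArg (Quotient.mk _) (B.zero_add a)
  infty_add := by
    rintro ⟨a⟩
    exact congrArg (Quotient.mk _) (B.infty_add a)

/-- The underlying set of `N/[q]N₊`. -/
abbrev hkQuot (q : ℕ) : Type u := Quotient (collapseSetoid (B.frob q B.nplus))

/-- The Hilbert–Kunz function `HKF(N,q) = #(N/[q]N₊)`, where `#S = |S| - 1`. -/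
noncomputable def hkf (q : ℕ) : ℕ := Nat.card (B.hkQuot q) - 1

/-- Pairs with an `infty` coordinate. -/
def inftyPairs : Set (X × Y) := {p | p.1 = B.infty ∨ p.2 = C.infty}

/-- Carrier of the smash product `M ∧ N`. -/
abbrev SmashCarrier : Type _ := Quotient (collapseSetoid (B.inftyPairs C))

lemma inftyPairs_add_left {p q : X × Y} (hp : p ∈ B.inftyPairs C) :
    (B.add p.1 q.1, C.add p.2 q.2) ∈ B.inftyPairs C := by
  rcases hp with h | h
  · exact Or.inl (by rw [h, B.infty_add])
  · exact Or.inr (by rw [h, C.infty_add])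

lemma inftyPairs_add_right {p q : X × Y} (hq : q ∈ B.inftyPairs C) :
    (B.add p.1 q.1, C.add p.2 q.2) ∈ B.inftyPairs C := by
  rcases hq with h | h
  · exact Or.inl (by rw [h, B.add_comm, B.infty_add])
  · exact Or.inr (by rw [h, C.add_comm, C.infty_add])

/-- The smash product binoid `M ∧ N`. -/
def smash : BinoidOn (B.SmashCarrier C) where
  add := Quotient.map₂ (fun p q => (B.add p.1 q.1, C.add p.2 q.2)) (by
    rintro p p' (rfl | ⟨hp, hp'⟩) q q' (rfl | ⟨hq, hq'⟩)
    · exact Or.inl rfl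
    · exact Or.inr ⟨B.inftyPairs_add_right C hq, B.inftyPairs_add_right C hq'⟩
    · exact Or.inr ⟨B.inftyPairs_add_left C hp, B.inftyPairs_add_left C hp'⟩
    · exact Or.inr ⟨B.inftyPairs_add_left C hp, B.inftyPairs_add_left C hp'⟩)
  zero := Quotient.mk _ (B.zero, C.zero)
  infty := Quotient.mk _ (B.infty, C.infty)
  add_assoc := by
    rintro ⟨a⟩ ⟨b⟩ ⟨c⟩
    exact congrArg (Quotient.mk _)
      (Prod.ext (B.add_assoc _ _ _) (C.add_assoc _ _ _))
  add_comm := by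
    rintro ⟨a⟩ ⟨b⟩
    exact congrArg (Quotient.mk _)
      (Prod.ext (B.add_comm _ _) (C.add_comm _ _))
  zero_add := by
    rintro ⟨a⟩
    exact congrArg (Quotient.mk _)
      (Prod.ext (B.zero_add _) (C.zero_add _))
  infty_add := by
    rintro ⟨a⟩
    exact congrArg (Quotient.mk _)
      (Prod.ext (B.infty_add _) (C.infty_add _))

end BinoidOn

/-- An `N`-set: a pointed set with an operation of the binoid. -/
structure NSetOn {X : Type u} (B : BinoidOn X) (S : Type w) where
  pt : S
  act : X → S → S
  act_zero : ∀ s, act B.zero s = s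
  act_infty : ∀ s, act B.infty s = pt
  act_pt : ∀ n, act n pt = pt
  act_add : ∀ n m s, act (B.add n m) s = act n (act m s)

section NSet

variable {X : Type u} {S : Type w} {B : BinoidOn X}

/-- One step of the connectedness relation on `S ∖ {p}`. -/
def NStep (σ : NSetOn B S) (s t : S) : Prop :=
  s ≠ σ.pt ∧ t ≠ σ.pt ∧ ∃ n, n ≠ B.infty ∧ (σ.act n s = t ∨ σ.act n t = s)

/-- The connectedness (equivalence) relation `∼_N` on `S ∖ {p}`. -/
def NConn (σ : NSetOn B S) : S → S → Prop := Relation.ReflTransGen (NStep σ)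

/-- `N`-subsets of an `N`-set. -/
def IsNSubset (σ : NSetOn B S) (T : Set S) : Prop :=
  σ.pt ∈ T ∧ ∀ n : X, ∀ s ∈ T, σ.act n s ∈ T

/-- `T` is a pointed union of two nontrivial `N`-subsets. -/
def IsReducibleSet (σ : NSetOn B S) (T : Set S) : Prop :=
  ∃ A A' : Set S, IsNSubset σ A ∧ IsNSubset σ A' ∧
    A ≠ {σ.pt} ∧ A' ≠ {σ.pt} ∧ A ∪ A' = T ∧ A ∩ A' = {σ.pt}

/-- An irreducible `N`-subset. -/
def IsIrreducibleSet (σ : NSetOn B S) (T : Set S) : Prop :=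
  IsNSubset σ T ∧ T ≠ {σ.pt} ∧ ¬ IsReducibleSet σ T

end NSet

/-- The trivial binoid `{0, ∞}`, realized on `Bool` (`false = 0`, `true = ∞`). -/
def trivB : BinoidOn Bool where
  add := or
  zero := false
  infty := true
  add_assoc := by decide
  add_comm := by decide
  zero_add := by decide
  infty_add := by decide

/-- The binoid `M^∞` obtained from a commutative monoid by adjoining `∞ = ⊤`. -/
def withTopBinoid (M : Type u) [AddCommMonoid M] : BinoidOn (WithTop M) where
  add := (· + ·)
  zero := 0
  infty := ⊤
  add_assoc := add_assoc
  add_comm := add_comm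
  zero_add := zero_add
  infty_add := fun a => WithTop.top_add a

/-! The primes of `M ∧ N` are order-isomorphic to pairs of primes of `M` and `N`: a prime `𝔓`
corresponds to its preimages under the canonical maps `M → M ∧ N ← N`, and a pair `(𝔭, 𝔮)` to
`(𝔭 ∧ N) ∪ (M ∧ 𝔮)`. The dimension of `M ∧ N` is thus the Krull dimension of the product poset
`Spec M × Spec N`, which is additive: chains in the factors concatenate to a chain in the
product, and conversely `(x, y) ↦ ht x + ht y` is strictly monotone on the product and bounded
by `dim M + dim N`. -/

namespace Order

variable {α β : Type*} [Preorder α] [Preorder β]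

lemma krullDim_eq_coe_iff {d : ℕ} :
    krullDim α = d ↔ (∃ l : LTSeries α, l.length = d) ∧ ∀ l : LTSeries α, l.length ≤ d := by
  rw [le_antisymm_iff, and_comm, le_krullDim_iff, krullDim, iSup_le_iff]
  norm_cast

lemma height_le_of_krullDim_eq {d : ℕ} (hd : krullDim α = d) (x : α) : height x ≤ d := by
  exact_mod_cast hd ▸ height_le_krullDim x

lemma krullDim_prod_eq_add {a b : ℕ} (ha : krullDim α = a) (hb : krullDim β = b) :
    krullDim (α × β) = (a + b : ℕ) := by
  refine le_antisymm ?_ ?_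
  · let f : α × β → Set.Iic (a + b : ℕ∞) := fun x =>
      ⟨height x.1 + height x.2,
        add_le_add (height_le_of_krullDim_eq ha x.1) (height_le_of_krullDim_eq hb x.2)⟩
    have hf : StrictMono f := by
      intro x y hxy
      have h1 := (height_le_of_krullDim_eq ha x.1).trans_lt (ENat.natCast_lt_top a)
      have h2 := (height_le_of_krullDim_eq hb x.2).trans_lt (ENat.natCast_lt_top b)
      show height x.1 + height x.2 < height y.1 + height y.2
      rcases Prod.lt_iff.1 hxy with ⟨hlt, hle⟩ | ⟨hle, hlt⟩
      · exact ENat.add_lt_add_of_lt_of_le h2.ne (height_strictMono hlt h1) (height_mono hle)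
      · exact ENat.add_lt_add_of_le_of_lt h1.ne (height_mono hle) (height_strictMono hlt h2)
    calc krullDim (α × β) ≤ krullDim (Set.Iic (a + b : ℕ∞)) := krullDim_le_of_strictMono f hf
      _ = (a + b : ℕ) := by rw [← height_eq_krullDim_Iic, height_enat]; norm_cast
  · obtain ⟨p, hp⟩ := le_krullDim_iff.1 ha.ge
    obtain ⟨q, hq⟩ := le_krullDim_iff.1 hb.ge
    have hfst : StrictMono fun x : α => (x, q.head) := fun _ _ h => Prod.mk_lt_mk_iff_left.2 h
    have hsnd : StrictMono fun y : β => (p.last, y) := fun _ _ h => Prod.mk_lt_mk_iff_right.2 h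
    refine le_krullDim_iff.2 ⟨(p.map _ hfst).smash (q.map _ hsnd) (by simp), ?_⟩
    exact congrArg₂ (· + ·) hp hq

end Order

namespace BinoidOn

section

variable {X X' : Type*}

structure Hom (B : BinoidOn X) (B' : BinoidOn X') where
  toFun : X → X'
  map_zero : toFun B.zero = B'.zero
  map_infty : toFun B.infty = B'.infty
  map_add : ∀ a b, toFun (B.add a b) = B'.add (toFun a) (toFun b)

instance {B : BinoidOn X} {B' : BinoidOn X'} : CoeFun (Hom B B') (fun _ => X → X') :=
  ⟨Hom.toFun⟩

variable (B : BinoidOn X) {B' : BinoidOn X'}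

protected lemma add_zero (x : X) : B.add x B.zero = x := by
  rw [B.add_comm, B.zero_add]

protected lemma add_infty (x : X) : B.add x B.infty = B.infty := by
  rw [B.add_comm, B.infty_add]

variable {B}

lemma IsIdeal.infty_mem {I : Set X} (hI : B.IsIdeal I) : B.infty ∈ I := by
  obtain ⟨⟨x, hx⟩, hadd⟩ := hI
  simpa only [B.add_infty] using hadd x hx B.infty

lemma IsPrime.zero_notMem {P : Set X} (hP : B.IsPrime P) : B.zero ∉ P := fun h0 =>
  hP.2.1 (Set.eq_univ_of_forall fun x => by simpa only [B.zero_add] using hP.1.2 _ h0 x)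

lemma IsPrime.preimage (f : Hom B B') {P : Set X'} (hP : B'.IsPrime P) : B.IsPrime (f ⁻¹' P) := by
  refine ⟨⟨⟨B.infty, ?_⟩, fun a ha x => ?_⟩, fun h => ?_, fun a b hab => ?_⟩
  · simpa only [Set.mem_preimage, f.map_infty] using hP.1.infty_mem
  · simpa only [Set.mem_preimage, f.map_add] using hP.1.2 _ ha (f x)
  · exact hP.zero_notMem (f.map_zero ▸ (h ▸ Set.mem_univ B.zero : B.zero ∈ f ⁻¹' P))
  · exact hP.2.2 _ _ (f.map_add a b ▸ hab)

variable (B)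

abbrev Spec : Type _ := {P : Set X // B.IsPrime P}

lemma exists_strictMono_iff_exists_ltSeries (k : ℕ) :
    (∃ c : Fin (k + 1) → Set X, StrictMono c ∧ ∀ i, B.IsPrime (c i)) ↔
      ∃ l : LTSeries B.Spec, l.length = k := by
  constructor
  · rintro ⟨c, hc, hprime⟩
    exact ⟨LTSeries.mk k (fun i => ⟨c i, hprime i⟩) fun _ _ hij => hc hij, rfl⟩
  · rintro ⟨l, rfl⟩
    exact ⟨fun i => (l i).1, l.strictMono, fun i => (l i).2⟩

lemma hasDim_iff_krullDim_eq (d : ℕ) : B.HasDim d ↔ Order.krullDim B.Spec = d := by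
  rw [Order.krullDim_eq_coe_iff, HasDim, exists_strictMono_iff_exists_ltSeries]
  refine and_congr_right fun _ => ⟨fun h l => ?_, fun h k c hc hprime => ?_⟩
  · obtain ⟨c, hc, hprime⟩ := (B.exists_strictMono_iff_exists_ltSeries l.length).2 ⟨l, rfl⟩
    exact h _ c hc hprime
  · obtain ⟨l, rfl⟩ := (B.exists_strictMono_iff_exists_ltSeries k).1 ⟨c, hc, hprime⟩
    exact h l

end

section Smash

variable {X Y : Type*} (B : BinoidOn X) (C : BinoidOn Y)

def smashInl : Hom B (B.smash C) where
  toFun x := Quotient.mk _ (x, C.zero)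
  map_zero := rfl
  map_infty := Quotient.sound (Or.inr ⟨Or.inl rfl, Or.inl rfl⟩)
  map_add _ _ := congrArg (Quotient.mk _) (Prod.ext rfl (C.zero_add C.zero).symm)

def smashInr : Hom C (B.smash C) where
  toFun y := Quotient.mk _ (B.zero, y)
  map_zero := rfl
  map_infty := Quotient.sound (Or.inr ⟨Or.inr rfl, Or.inl rfl⟩)
  map_add _ _ := congrArg (Quotient.mk _) (Prod.ext (B.zero_add B.zero).symm rfl)

lemma smash_mk_eq_add (p : X × Y) :
    (Quotient.mk _ p : B.SmashCarrier C) = (B.smash C).add (B.smashInl C p.1) (B.smashInr C p.2) :=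
  congrArg (Quotient.mk _) (Prod.ext (B.add_zero p.1).symm (C.zero_add p.2).symm)

def smashPrime (P : Set X) (Q : Set Y) : Set (B.SmashCarrier C) :=
  Quotient.mk _ '' {p | p.1 ∈ P ∨ p.2 ∈ Q}

variable {B C} {P P' : Set X} {Q Q' : Set Y}

lemma mk_mem_smashPrime (hP : B.infty ∈ P) (hQ : C.infty ∈ Q) (p : X × Y) :
    (Quotient.mk _ p : B.SmashCarrier C) ∈ B.smashPrime C P Q ↔ p.1 ∈ P ∨ p.2 ∈ Q := by
  refine ⟨?_, fun h => ⟨p, h, rfl⟩⟩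
  rintro ⟨p', hp', hpp'⟩
  rcases Quotient.exact hpp' with rfl | ⟨_, h | h⟩
  · exact hp'
  · exact Or.inl (h ▸ hP)
  · exact Or.inr (h ▸ hQ)

lemma IsPrime.smashPrime (hP : B.IsPrime P) (hQ : C.IsPrime Q) :
    (B.smash C).IsPrime (B.smashPrime C P Q) := by
  have hmem := mk_mem_smashPrime (C := C) hP.1.infty_mem hQ.1.infty_mem
  refine ⟨⟨⟨_, (hmem (B.infty, C.infty)).2 (Or.inl hP.1.infty_mem)⟩, ?_⟩, fun h => ?_, ?_⟩
  · rintro _ ⟨p, hp, rfl⟩ ⟨q⟩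
    exact (hmem _).2 (hp.imp (fun h => hP.1.2 _ h _) fun h => hQ.1.2 _ h _)
  · rcases (hmem (B.zero, C.zero)).1 (h ▸ Set.mem_univ _) with h0 | h0
    exacts [hP.zero_notMem h0, hQ.zero_notMem h0]
  · rintro ⟨p⟩ ⟨q⟩ hpq
    rcases (hmem _).1 hpq with h | h
    · exact (hP.2.2 _ _ h).imp (fun h => (hmem _).2 (Or.inl h)) fun h => (hmem _).2 (Or.inl h)
    · exact (hQ.2.2 _ _ h).imp (fun h => (hmem _).2 (Or.inr h)) fun h => (hmem _).2 (Or.inr h)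

lemma smashInl_preimage_smashPrime (hP : B.IsPrime P) (hQ : C.IsPrime Q) :
    B.smashInl C ⁻¹' B.smashPrime C P Q = P := by
  ext x
  simp only [Set.mem_preimage]
  rw [smashInl, mk_mem_smashPrime hP.1.infty_mem hQ.1.infty_mem]
  exact or_iff_left hQ.zero_notMem

lemma smashInr_preimage_smashPrime (hP : B.IsPrime P) (hQ : C.IsPrime Q) :
    B.smashInr C ⁻¹' B.smashPrime C P Q = Q := by
  ext y
  simp only [Set.mem_preimage]
  rw [smashInr, mk_mem_smashPrime hP.1.infty_mem hQ.1.infty_mem]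
  exact or_iff_right hP.zero_notMem

lemma smashPrime_preimage {S : Set (B.SmashCarrier C)} (hS : (B.smash C).IsPrime S) :
    B.smashPrime C (B.smashInl C ⁻¹' S) (B.smashInr C ⁻¹' S) = S := by
  refine Set.ext fun z => Quotient.inductionOn z fun p => ?_
  rw [mk_mem_smashPrime (hS.preimage _).1.infty_mem (hS.preimage _).1.infty_mem,
    B.smash_mk_eq_add C p]
  exact ⟨fun h => h.elim (fun h => hS.1.2 _ h _) fun h => (B.smash C).add_comm _ _ ▸ hS.1.2 _ h _,
    hS.2.2 _ _⟩

lemma smashPrime_mono (hP : P ⊆ P') (hQ : Q ⊆ Q') :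
    B.smashPrime C P Q ⊆ B.smashPrime C P' Q' :=
  Set.image_mono fun _ => Or.imp (@hP _) (@hQ _)

variable (B C)

def smashSpecEquiv : (B.smash C).Spec ≃o B.Spec × C.Spec :=
  Equiv.toOrderIso
    { toFun := fun P => (⟨_, P.2.preimage (B.smashInl C)⟩, ⟨_, P.2.preimage (B.smashInr C)⟩)
      invFun := fun PQ => ⟨_, PQ.1.2.smashPrime PQ.2.2⟩
      left_inv := fun P => Subtype.ext (smashPrime_preimage P.2)
      right_inv := fun PQ => Prod.ext (Subtype.ext (smashInl_preimage_smashPrime PQ.1.2 PQ.2.2))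
        (Subtype.ext (smashInr_preimage_smashPrime PQ.1.2 PQ.2.2)) }
    (fun _ _ h => ⟨Set.preimage_mono h, Set.preimage_mono h⟩)
    fun _ _ h => smashPrime_mono h.1 h.2

end Smash

end BinoidOn

theorem stmt10_general {X Y : Type} (B : BinoidOn X) (C : BinoidOn Y)
    (a b : ℕ) (hA : B.HasDim a) (hB : C.HasDim b) :
    (B.smash C).HasDim (a + b) := by
  rw [BinoidOn.hasDim_iff_krullDim_eq] at hA hB ⊢
  rw [Order.krullDim_eq_of_orderIso (B.smashSpecEquiv C)]
  exact Order.krullDim_prod_eq_add hA hB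

/-- For nonzero commutative binoids `M, N` of finite combinatorial
dimension, `dim (M ∧ N) = dim M + dim N`. -/
theorem stmt10 {X Y : Type} (B : BinoidOn X) (C : BinoidOn Y)
    (hX : B.zero ≠ B.infty) (hY : C.zero ≠ C.infty)
    (a b : ℕ) (hA : B.HasDim a) (hB : C.HasDim b) :
    (B.smash C).HasDim (a + b) :=
  stmt10_general B C a b hA hB
end

section
/- Let N be a finitely generated, semipositive, separated binoid. Then the Hilbert-Kunz function HKF(N,q) = #(N/[q]N₊) is eventually constant in q if and only if N is finite. -/
/-! Each complement `N ∖ [q]N₊` is finite: an element outside `[q]N₊` is a unit plus a sum of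
non-unit generators, each occurring fewer than `q` times. These complements grow with `q`, and
since `[q]N₊ ⊆ qN₊`, separatedness makes them exhaust `N ∖ {∞}`. As `HKF(N, q)` is their size,
it is eventually constant exactly when their union, hence `N`, is finite. -/

theorem Monotone.ncard_eventually_const_iff_finite_iUnion {α : Type*} {S : ℕ → Set α}
    (hS : Monotone S) (hfin : ∀ n, (S n).Finite) :
    (∃ n₀ c, ∀ n ≥ n₀, (S n).ncard = c) ↔ (⋃ n, S n).Finite := by
  constructor
  · rintro ⟨n₀, c, hc⟩
    refine (hfin n₀).subset (Set.iUnion_subset fun n => ?_)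
    have hstable : S n₀ = S (max n n₀) :=
      Set.eq_of_subset_of_ncard_le (hS (le_max_right _ _))
        (by rw [hc _ le_rfl, hc _ (le_max_right _ _)]) (hfin _)
    exact hstable ▸ hS (le_max_left _ _)
  · intro hU
    obtain ⟨n₀, hn₀⟩ := hS.directed_le.exists_mem_subset_of_finset_subset_biUnion
      (s := hU.toFinset) (by simp)
    refine ⟨n₀, (⋃ n, S n).ncard, fun n hn => congrArg Set.ncard ?_⟩
    exact (Set.subset_iUnion S n).antisymm ((hU.coe_toFinset ▸ hn₀).trans (hS hn))

section Collapse

variable {X : Type u} {A : Set X}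

open Classical in
noncomputable def collapseSetoid.quotientEquivOption (a : A) :
    Quotient (collapseSetoid A) ≃ Option ↥Aᶜ where
  toFun := Quotient.lift (fun x => if hx : x ∈ A then none else some ⟨x, hx⟩) (by
    rintro x y (rfl | ⟨hx, hy⟩)
    · rfl
    · simp [hx, hy])
  invFun o := o.elim (Quotient.mk _ a) (fun x => Quotient.mk _ x)
  left_inv := by
    refine Quotient.ind fun x => ?_
    by_cases hx : x ∈ A
    · simpa [hx] using Quotient.sound (Or.inr ⟨a.2, hx⟩)
    · simp [hx]
  right_inv := by
    rintro (_ | ⟨x, hx⟩)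
    · simp [a.2]
    · simp [Set.notMem_of_mem_compl hx]

theorem Nat.card_quotient_collapseSetoid (hA : A.Nonempty) (hfin : Aᶜ.Finite) :
    Nat.card (Quotient (collapseSetoid A)) = Aᶜ.ncard + 1 := by
  have : Finite ↥Aᶜ := hfin
  rw [Nat.card_congr (collapseSetoid.quotientEquivOption ⟨_, hA.some_mem⟩), Finite.card_option,
    Nat.card_coe_set_eq]

end Collapse

namespace BinoidOn

variable {X : Type u} (B : BinoidOn X)

/-- The commutative monoid underlying `B`; `B.listSum` and `B.smul` are definitionally its
`List.sum` and `nsmul`, so Mathlib's big-operator lemmas apply to them. -/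
abbrev toAddCommMonoid : AddCommMonoid X where
  add := B.add
  zero := B.zero
  add_assoc := B.add_assoc
  zero_add := B.zero_add
  add_zero a := (B.add_comm a B.zero).trans (B.zero_add a)
  add_comm := B.add_comm
  nsmul := B.smul
  nsmul_zero _ := rfl
  nsmul_succ n a := B.add_comm a (B.smul n a)

lemma add_mem_nplus {a : X} (ha : a ∈ B.nplus) (x : X) : B.add a x ∈ B.nplus := by
  rintro ⟨c, hc⟩
  exact ha ⟨B.add x c, by rw [← B.add_assoc, hc]⟩

lemma infty_mem_nplus (h0 : B.zero ≠ B.infty) : B.infty ∈ B.nplus := by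
  rintro ⟨a, ha⟩
  exact h0 (by rw [← ha, B.infty_add])

lemma infty_mem_frob {I : Set X} (hI : B.infty ∈ I) (q : ℕ) : B.infty ∈ B.frob q I :=
  ⟨B.smul q B.infty, ⟨B.infty, hI, rfl⟩, B.infty, by rw [B.add_comm, B.infty_add]⟩

lemma frob_antitone (I : Set X) : Antitone (B.frob · I) := by
  let := B.toAddCommMonoid
  rintro q q' hqq' _ ⟨_, ⟨a, ha, rfl⟩, n, rfl⟩
  refine ⟨B.smul q a, ⟨a, ha, rfl⟩, B.add (B.smul (q' - q) a) n, ?_⟩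
  show q' • a + n = q • a + ((q' - q) • a + n)
  rw [← _root_.add_assoc, ← add_nsmul, Nat.add_sub_cancel' hqq']

lemma frob_subset_nSum {I : Set X} (hI : ∀ a ∈ I, ∀ x, B.add a x ∈ I) {q : ℕ} (hq : q ≠ 0) :
    B.frob q I ⊆ B.nSum q I := by
  let := B.toAddCommMonoid
  obtain ⟨k, rfl⟩ := Nat.exists_eq_succ_of_ne_zero hq
  rintro _ ⟨_, ⟨a, ha, rfl⟩, n, rfl⟩
  refine ⟨List.replicate k a ++ [B.add a n], by simp, ?_, ?_⟩
  · simp only [List.mem_append, List.mem_replicate, List.mem_singleton]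
    rintro b (⟨-, rfl⟩ | rfl)
    exacts [ha, hI a ha n]
  · show (k + 1) • a + n = (List.replicate k a ++ [a + n]).sum
    rw [List.sum_append, List.sum_replicate, List.sum_singleton, succ_nsmul, _root_.add_assoc]

lemma iUnion_compl_frob_nplus (h0 : B.zero ≠ B.infty)
    (hsep : (⋂ n ∈ Set.Ici 1, B.nSum n B.nplus) = {B.infty}) :
    ⋃ q, (B.frob q B.nplus)ᶜ = {B.infty}ᶜ := by
  ext x
  simp only [Set.mem_iUnion, Set.mem_compl_iff, Set.mem_singleton_iff]
  refine ⟨fun ⟨q, hq⟩ hx => hq (hx ▸ B.infty_mem_frob (B.infty_mem_nplus h0) q), fun hx => ?_⟩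
  have : x ∉ ⋂ n ∈ Set.Ici 1, B.nSum n B.nplus := hsep ▸ hx
  simp only [Set.mem_iInter₂, Set.mem_Ici, not_forall] at this
  obtain ⟨q, hq, hxq⟩ := this
  exact ⟨q, fun h => hxq (B.frob_subset_nSum (fun a ha => B.add_mem_nplus ha) (by omega) h)⟩

lemma listSum_mem_frob_of_le_count [DecidableEq X] {I : Set X} {l : List X} {g : X} {q : ℕ}
    (hg : g ∈ I) (hq : q ≤ l.count g) : B.listSum l ∈ B.frob q I := by
  let := B.toAddCommMonoid
  rw [← Multiset.coe_count] at hq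
  obtain ⟨r, hr⟩ := Multiset.le_iff_exists_add.mp (Multiset.le_count_iff_replicate_le.mp hq)
  refine ⟨_, ⟨g, hg, rfl⟩, r.sum, ?_⟩
  show l.sum = q • g + r.sum
  rw [← Multiset.sum_coe, hr, Multiset.sum_add, Multiset.sum_replicate]

lemma finite_compl_frob_nplus (hfg : B.FG) (hunits : B.unitsSet.Finite) (q : ℕ) :
    (B.frob q B.nplus)ᶜ.Finite := by
  classical
  let := B.toAddCommMonoid
  obtain ⟨G, hG⟩ := hfg
  refine (((hunits.prod (q • G.val).powerset.toFinset.finite_toSet).image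
    fun p : X × Multiset X => p.1 + p.2.sum).insert B.infty).subset ?_
  intro x hx
  obtain rfl | ⟨l, hlG, rfl⟩ := hG x
  · exact Set.mem_insert _ _
  refine Or.inr ?_
  set m : Multiset X := ↑l
  have hcount : ∀ g ∈ B.nplus, m.count g < q := fun g hg =>
    not_le.mp fun hle => hx (B.listSum_mem_frob_of_le_count hg (by rwa [← Multiset.coe_count]))
  refine ⟨((m.filter (· ∈ B.unitsSet)).sum, m.filter (· ∉ B.unitsSet)), ⟨?_, ?_⟩, ?_⟩
  · have hunit : ∀ u, u ∈ B.unitsSet ↔ IsAddUnit u := fun u => isAddUnit_iff_exists_neg.symm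
    rw [hunit]
    exact Multiset.sum_induction _ (m.filter (· ∈ B.unitsSet)) (fun _ _ => IsAddUnit.add)
      isAddUnit_zero fun u hu => (hunit u).mp (Multiset.mem_filter.mp hu).2
  · rw [Finset.mem_coe, Multiset.mem_toFinset, Multiset.mem_powerset, Multiset.le_iff_count]
    intro a
    by_cases ha : a ∈ m.filter (· ∉ B.unitsSet)
    · obtain ⟨ham, hau⟩ := Multiset.mem_filter.mp ha
      calc (m.filter (· ∉ B.unitsSet)).count a ≤ m.count a :=
            Multiset.count_le_of_le _ (Multiset.filter_le _ _)
        _ ≤ q := (hcount a hau).le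
        _ = (q • G.val).count a := by
          rw [Multiset.count_nsmul, Multiset.count_eq_one_of_mem G.nodup (hlG a ham), mul_one]
    · rw [Multiset.count_eq_zero.mpr ha]
      exact Nat.zero_le _
  · show _ + _ = l.sum
    rw [← Multiset.sum_add, Multiset.filter_add_not, Multiset.sum_coe]

lemma hkf_eq_ncard (h0 : B.zero ≠ B.infty) {q : ℕ} (hfin : (B.frob q B.nplus)ᶜ.Finite) :
    B.hkf q = (B.frob q B.nplus)ᶜ.ncard := by
  rw [hkf, Nat.card_quotient_collapseSetoid ⟨_, B.infty_mem_frob (B.infty_mem_nplus h0) q⟩ hfin,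
    Nat.add_sub_cancel]

end BinoidOn

/-- For a finitely generated, semipositive, separated binoid `N`,
the Hilbert–Kunz function `HKF(N, q)` is eventually constant iff `N` is finite. -/
theorem stmt15 {X : Type} (B : BinoidOn X) (hfg : B.FG) (hsp : B.Semipositive)
    (hsep : (⋂ n ∈ Set.Ici 1, B.nSum n B.nplus) = {B.infty}) :
    (∃ q0 c : ℕ, ∀ q ≥ q0, B.hkf q = c) ↔ Finite X := by
  have hmono : Monotone fun q => (B.frob q B.nplus)ᶜ :=
    fun _ _ h => Set.compl_subset_compl.mpr (B.frob_antitone _ h)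
  have hfin := B.finite_compl_frob_nplus hfg hsp.2
  simp_rw [B.hkf_eq_ncard hsp.1 (hfin _)]
  rw [hmono.ncard_eventually_const_iff_finite_iUnion hfin, B.iUnion_compl_frob_nplus hsp.1 hsep]
  exact ⟨(Set.finite_singleton _).finite_of_compl, fun _ => Set.toFinite _⟩
end
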